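/- On smooth functions φ : ℝ⁴ → ℂ with coordinates (x₀,x₁,x₂,x₃), define the D'Alembert operator □φ = ∂₀²φ − (∂₁² + ∂₂² + ∂₃²)φ and, for a,b ∈ {0,1,2,3}, the operator G_{ab}φ = x_a ∂_b φ. Then for all a,b and all smooth φ: (i) the first commutator is [□, G_{ab}]φ = 2(δ_{0a} ∂₀∂_b φ − δ_{1a}∂₁∂_bφ − δ_{2a}∂₂∂_bφ − δ_{3a}∂₃∂_bφ), and (ii) the second-order commutator vanishes: [□,[□, G_{ab}]]φ = 0. (Hence IGL(4,ℝ) is a type p = 2 symmetry of the D'Alembert equation as well.) -/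

import Mathlib

open Complex

/-- Partial derivative in the `i`-th coordinate direction on `ℝ⁴`. -/
noncomputable def pd (i : Fin 4) (f : (Fin 4 → ℝ) → ℂ) : (Fin 4 → ℝ) → ℂ :=
  fun x => fderiv ℝ f x (Pi.single i 1)

/-- The D'Alembert (wave) operator `□φ = ∂₀²φ − (∂₁² + ∂₂² + ∂₃²)φ`. -/
noncomputable def dAl (f : (Fin 4 → ℝ) → ℂ) : (Fin 4 → ℝ) → ℂ :=
  fun x => pd 0 (pd 0 f) x - (pd 1 (pd 1 f) x + pd 2 (pd 2 f) x + pd 3 (pd 3 f) x)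

/-- The linear generator `G_{ab} φ = x_a ∂_b φ`. -/
noncomputable def Gop (a b : Fin 4) (f : (Fin 4 → ℝ) → ℂ) : (Fin 4 → ℝ) → ℂ :=
  fun x => (x a : ℂ) * pd b f x

noncomputable def coordC (a : Fin 4) : (Fin 4 → ℝ) →L[ℝ] ℂ :=
  Complex.ofRealCLM.comp (ContinuousLinearMap.proj a)

lemma coord_eq (a : Fin 4) : (fun y : Fin 4 → ℝ => ((y a : ℝ) : ℂ)) = coordC a := rfl

lemma pd_smooth (i : Fin 4) {f : (Fin 4 → ℝ) → ℂ} (hf : ContDiff ℝ (⊤ : ℕ∞) f) :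
    ContDiff ℝ (⊤ : ℕ∞) (pd i f) :=
  (hf.fderiv_right (by simp)).clm_apply contDiff_const

lemma pd_diff (i : Fin 4) {f : (Fin 4 → ℝ) → ℂ} (hf : ContDiff ℝ (⊤ : ℕ∞) f) :
    Differentiable ℝ (pd i f) :=
  (pd_smooth i hf).differentiable (by simp)

lemma dAl_smooth {f : (Fin 4 → ℝ) → ℂ} (hf : ContDiff ℝ (⊤ : ℕ∞) f) : ContDiff ℝ (⊤ : ℕ∞) (dAl f) :=
  ((pd_smooth 0 (pd_smooth 0 hf)).sub
    (((pd_smooth 1 (pd_smooth 1 hf)).add (pd_smooth 2 (pd_smooth 2 hf))).add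
      (pd_smooth 3 (pd_smooth 3 hf))))

lemma pd_add (i : Fin 4) {f g : (Fin 4 → ℝ) → ℂ} (hf : Differentiable ℝ f)
    (hg : Differentiable ℝ g) :
    pd i (fun y => f y + g y) = fun x => pd i f x + pd i g x := by
  funext x
  simp [pd, fderiv_fun_add (hf x) (hg x)]

lemma pd_sub (i : Fin 4) {f g : (Fin 4 → ℝ) → ℂ} (hf : Differentiable ℝ f)
    (hg : Differentiable ℝ g) :
    pd i (fun y => f y - g y) = fun x => pd i f x - pd i g x := by
  funext x
  simp [pd, fderiv_fun_sub (hf x) (hg x)]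

lemma pd_const_mul (i : Fin 4) (c : ℂ) {f : (Fin 4 → ℝ) → ℂ} (hf : Differentiable ℝ f) :
    pd i (fun y => c * f y) = fun x => c * pd i f x := by
  funext x
  simp [pd, fderiv_const_mul (hf x) c]

lemma pd_coord_mul (i a : Fin 4) {g : (Fin 4 → ℝ) → ℂ} (hg : Differentiable ℝ g) :
    pd i (fun y => (y a : ℂ) * g y) =
      fun x => (if a = i then 1 else 0) * g x + (x a : ℂ) * pd i g x := by
  funext x
  have h1 : DifferentiableAt ℝ (fun y : Fin 4 → ℝ => ((y a : ℝ) : ℂ)) x :=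
    (coordC a).differentiableAt
  show fderiv ℝ (fun y => ((y a : ℝ) : ℂ) * g y) x (Pi.single i 1) = _
  rw [fderiv_fun_mul h1 (hg x)]
  have h2 : fderiv ℝ (fun y : Fin 4 → ℝ => ((y a : ℝ) : ℂ)) x = coordC a := by
    rw [coord_eq]; exact (coordC a).fderiv
  simp only [ContinuousLinearMap.add_apply, ContinuousLinearMap.smul_apply, h2, pd]
  simp [coordC, Pi.single_apply, smul_eq_mul, apply_ite Complex.ofReal]
  ring

lemma pd_pd_comm (i j : Fin 4) {f : (Fin 4 → ℝ) → ℂ} (hf : ContDiff ℝ (⊤ : ℕ∞) f) (x : Fin 4 → ℝ) :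
    pd i (pd j f) x = pd j (pd i f) x := by
  have hdf : Differentiable ℝ (fderiv ℝ f) :=
    (hf.fderiv_right (m := (⊤ : ℕ∞)) (by simp)).differentiable (by simp)
  have key : ∀ v w : Fin 4 → ℝ,
      pd i (fun y => fderiv ℝ f y w) x = fderiv ℝ (fderiv ℝ f) x (Pi.single i 1) w := by
    intro v w
    show fderiv ℝ (fun y => (fderiv ℝ f y) w) x (Pi.single i 1) = _
    rw [fderiv_clm_apply (hdf x) (differentiableAt_const w)]
    simp
  have key2 : ∀ w : Fin 4 → ℝ,
      pd j (fun y => fderiv ℝ f y w) x = fderiv ℝ (fderiv ℝ f) x (Pi.single j 1) w := by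
    intro w
    show fderiv ℝ (fun y => (fderiv ℝ f y) w) x (Pi.single j 1) = _
    rw [fderiv_clm_apply (hdf x) (differentiableAt_const w)]
    simp
  have hsymm : IsSymmSndFDerivAt ℝ f x :=
    hf.contDiffAt.isSymmSndFDerivAt (by rw [minSmoothness_of_isRCLikeNormedField]; exact WithTop.coe_le_coe.mpr (le_top : (2 : ℕ∞) ≤ ⊤))
  calc pd i (pd j f) x = fderiv ℝ (fderiv ℝ f) x (Pi.single i 1) (Pi.single j 1) :=
        key (Pi.single i 1) (Pi.single j 1)
    _ = fderiv ℝ (fderiv ℝ f) x (Pi.single j 1) (Pi.single i 1) := hsymm _ _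
    _ = pd j (pd i f) x := (key2 (Pi.single i 1)).symm

lemma coord_smooth (a : Fin 4) :
    ContDiff ℝ (⊤ : ℕ∞) (fun y : Fin 4 → ℝ => ((y a : ℝ) : ℂ)) := by
  rw [coord_eq]; exact (coordC a).contDiff

lemma Gop_smooth (a b : Fin 4) {φ : (Fin 4 → ℝ) → ℂ} (hφ : ContDiff ℝ (⊤ : ℕ∞) φ) :
    ContDiff ℝ (⊤ : ℕ∞) (Gop a b φ) :=
  (coord_smooth a).mul (pd_smooth b hφ)

lemma pd2_G (i a b : Fin 4) {φ : (Fin 4 → ℝ) → ℂ} (hφ : ContDiff ℝ (⊤ : ℕ∞) φ) (x : Fin 4 → ℝ) :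
    pd i (pd i (Gop a b φ)) x =
      2 * (if a = i then 1 else 0) * pd i (pd b φ) x
        + (x a : ℂ) * pd i (pd i (pd b φ)) x := by
  have hψ := pd_smooth b hφ
  have h1 : pd i (Gop a b φ) =
      fun x => (if a = i then (1:ℂ) else 0) * pd b φ x + (x a : ℂ) * pd i (pd b φ) x := by
    show pd i (fun y => (y a : ℂ) * pd b φ y) = _
    exact pd_coord_mul i a (hψ.differentiable (by simp))
  rw [h1]
  have d1 : Differentiable ℝ (fun x : Fin 4 → ℝ => (if a = i then (1:ℂ) else 0) * pd b φ x) :=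
    (pd_diff b hφ).const_mul _
  have d2 : Differentiable ℝ (fun x : Fin 4 → ℝ => (x a : ℂ) * pd i (pd b φ) x) :=
    (((coordC a).differentiable : Differentiable ℝ (fun y : Fin 4 → ℝ => ((y a : ℝ) : ℂ)))).mul
      (pd_diff i hψ)
  rw [pd_add i d1 d2, pd_const_mul i _ (pd_diff b hφ), pd_coord_mul i a (pd_diff i hψ)]
  ring

lemma pd3_comm (j i : Fin 4) {φ : (Fin 4 → ℝ) → ℂ} (hφ : ContDiff ℝ (⊤ : ℕ∞) φ) (x : Fin 4 → ℝ) :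
    pd j (pd i (pd i φ)) x = pd i (pd i (pd j φ)) x := by
  rw [pd_pd_comm j i (pd_smooth i hφ) x]
  have h2 : pd j (pd i φ) = pd i (pd j φ) := funext (pd_pd_comm j i hφ)
  rw [h2]

lemma pd_dAl (j : Fin 4) {φ : (Fin 4 → ℝ) → ℂ} (hφ : ContDiff ℝ (⊤ : ℕ∞) φ) :
    pd j (dAl φ) = dAl (pd j φ) := by
  funext x
  have d0 := pd_diff 0 (pd_smooth 0 hφ)
  have d1 := pd_diff 1 (pd_smooth 1 hφ)
  have d2 := pd_diff 2 (pd_smooth 2 hφ)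
  have d3 := pd_diff 3 (pd_smooth 3 hφ)
  show pd j (fun y => pd 0 (pd 0 φ) y -
      (pd 1 (pd 1 φ) y + pd 2 (pd 2 φ) y + pd 3 (pd 3 φ) y)) x = dAl (pd j φ) x
  rw [pd_sub j (g := fun y => pd 1 (pd 1 φ) y + pd 2 (pd 2 φ) y + pd 3 (pd 3 φ) y) d0 ((d1.add d2).add d3),
    pd_add j (f := fun y => pd 1 (pd 1 φ) y + pd 2 (pd 2 φ) y) (d1.add d2) d3, pd_add j d1 d2]
  simp only [dAl]
  rw [pd3_comm j 0 hφ x, pd3_comm j 1 hφ x, pd3_comm j 2 hφ x, pd3_comm j 3 hφ x]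

lemma comm1 (a b : Fin 4) {φ : (Fin 4 → ℝ) → ℂ} (hφ : ContDiff ℝ (⊤ : ℕ∞) φ) :
    dAl (Gop a b φ) = fun x =>
      2 * ((if a = 0 then 1 else 0) * pd 0 (pd b φ) x
        - (if a = 1 then 1 else 0) * pd 1 (pd b φ) x
        - (if a = 2 then 1 else 0) * pd 2 (pd b φ) x
        - (if a = 3 then 1 else 0) * pd 3 (pd b φ) x)
      + Gop a b (dAl φ) x := by
  funext x
  show pd 0 (pd 0 (Gop a b φ)) x -
      (pd 1 (pd 1 (Gop a b φ)) x + pd 2 (pd 2 (Gop a b φ)) x + pd 3 (pd 3 (Gop a b φ)) x) = _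
  rw [pd2_G 0 a b hφ x, pd2_G 1 a b hφ x, pd2_G 2 a b hφ x, pd2_G 3 a b hφ x]
  have hb : pd b (dAl φ) x = dAl (pd b φ) x := congrFun (pd_dAl b hφ) x
  simp only [Gop, hb, dAl]
  ring

lemma dAl_add {f g : (Fin 4 → ℝ) → ℂ} (hf : ContDiff ℝ (⊤ : ℕ∞) f) (hg : ContDiff ℝ (⊤ : ℕ∞) g)
    (x : Fin 4 → ℝ) :
    dAl (fun y => f y + g y) x = dAl f x + dAl g x := by
  have hfd := hf.differentiable (by simp)
  have hgd := hg.differentiable (by simp)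
  simp only [dAl]
  rw [pd_add 0 hfd hgd, pd_add 1 hfd hgd, pd_add 2 hfd hgd, pd_add 3 hfd hgd,
    pd_add 0 (pd_diff 0 hf) (pd_diff 0 hg), pd_add 1 (pd_diff 1 hf) (pd_diff 1 hg),
    pd_add 2 (pd_diff 2 hf) (pd_diff 2 hg), pd_add 3 (pd_diff 3 hf) (pd_diff 3 hg)]
  ring

lemma dAl_sub {f g : (Fin 4 → ℝ) → ℂ} (hf : ContDiff ℝ (⊤ : ℕ∞) f) (hg : ContDiff ℝ (⊤ : ℕ∞) g)
    (x : Fin 4 → ℝ) :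
    dAl (fun y => f y - g y) x = dAl f x - dAl g x := by
  have hfd := hf.differentiable (by simp)
  have hgd := hg.differentiable (by simp)
  simp only [dAl]
  rw [pd_sub 0 hfd hgd, pd_sub 1 hfd hgd, pd_sub 2 hfd hgd, pd_sub 3 hfd hgd,
    pd_sub 0 (pd_diff 0 hf) (pd_diff 0 hg), pd_sub 1 (pd_diff 1 hf) (pd_diff 1 hg),
    pd_sub 2 (pd_diff 2 hf) (pd_diff 2 hg), pd_sub 3 (pd_diff 3 hf) (pd_diff 3 hg)]
  ring

lemma dAl_const_mul (c : ℂ) {f : (Fin 4 → ℝ) → ℂ} (hf : ContDiff ℝ (⊤ : ℕ∞) f) (x : Fin 4 → ℝ) :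
    dAl (fun y => c * f y) x = c * dAl f x := by
  have hfd := hf.differentiable (by simp)
  simp only [dAl]
  rw [pd_const_mul 0 c hfd, pd_const_mul 1 c hfd, pd_const_mul 2 c hfd, pd_const_mul 3 c hfd,
    pd_const_mul 0 c (pd_diff 0 hf), pd_const_mul 1 c (pd_diff 1 hf),
    pd_const_mul 2 c (pd_diff 2 hf), pd_const_mul 3 c (pd_diff 3 hf)]
  ring

lemma dAl_comb (c0 c1 c2 c3 : ℂ) {f0 f1 f2 f3 : (Fin 4 → ℝ) → ℂ}
    (h0 : ContDiff ℝ (⊤ : ℕ∞) f0) (h1 : ContDiff ℝ (⊤ : ℕ∞) f1) (h2 : ContDiff ℝ (⊤ : ℕ∞) f2)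
    (h3 : ContDiff ℝ (⊤ : ℕ∞) f3) (x : Fin 4 → ℝ) :
    dAl (fun y => 2 * (c0 * f0 y - c1 * f1 y - c2 * f2 y - c3 * f3 y)) x =
      2 * (c0 * dAl f0 x - c1 * dAl f1 x - c2 * dAl f2 x - c3 * dAl f3 x) := by
  have s0 : ContDiff ℝ (⊤ : ℕ∞) (fun y => c0 * f0 y) := contDiff_const.mul h0
  have s1 : ContDiff ℝ (⊤ : ℕ∞) (fun y => c1 * f1 y) := contDiff_const.mul h1
  have s2 : ContDiff ℝ (⊤ : ℕ∞) (fun y => c2 * f2 y) := contDiff_const.mul h2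
  have s3 : ContDiff ℝ (⊤ : ℕ∞) (fun y => c3 * f3 y) := contDiff_const.mul h3
  rw [dAl_const_mul 2 (((s0.sub s1).sub s2).sub s3), dAl_sub ((s0.sub s1).sub s2) s3,
    dAl_sub (s0.sub s1) s2, dAl_sub s0 s1, dAl_const_mul c0 h0, dAl_const_mul c1 h1,
    dAl_const_mul c2 h2, dAl_const_mul c3 h3]

lemma dAl_pd_pd (i b : Fin 4) {φ : (Fin 4 → ℝ) → ℂ} (hφ : ContDiff ℝ (⊤ : ℕ∞) φ) (x : Fin 4 → ℝ) :
    dAl (pd i (pd b φ)) x = pd i (pd b (dAl φ)) x := by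
  rw [pd_dAl b hφ]
  exact (congrFun (pd_dAl i (pd_smooth b hφ)) x).symm


/-- for the D'Alembert operator `□` and the generators
`G_{ab} = x_a∂_b`, (i) the first commutator is
`[□,G_{ab}]φ = 2(δ_{0a}∂₀∂_bφ − δ_{1a}∂₁∂_bφ − δ_{2a}∂₂∂_bφ − δ_{3a}∂₃∂_bφ)`,
and (ii) the second-order commutator `[□,[□,G_{ab}]]φ` vanishes identically. -/
theorem stmt_16 :
    ∀ a b : Fin 4, ∀ φ : (Fin 4 → ℝ) → ℂ, ContDiff ℝ (⊤ : ℕ∞) φ →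
      (∀ x : Fin 4 → ℝ,
        dAl (Gop a b φ) x - Gop a b (dAl φ) x =
          2 * ((if a = 0 then 1 else 0) * pd 0 (pd b φ) x
            - (if a = 1 then 1 else 0) * pd 1 (pd b φ) x
            - (if a = 2 then 1 else 0) * pd 2 (pd b φ) x
            - (if a = 3 then 1 else 0) * pd 3 (pd b φ) x)) ∧
      (∀ x : Fin 4 → ℝ,
        dAl (dAl (Gop a b φ)) x - 2 * dAl (Gop a b (dAl φ)) x
          + Gop a b (dAl (dAl φ)) x = 0) := by
  intro a b φ hφ
  have hdφ : ContDiff ℝ (⊤ : ℕ∞) (dAl φ) := dAl_smooth hφ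
  constructor
  · intro x
    rw [congrFun (comm1 a b hφ) x]
    ring
  · intro x
    have h1 := comm1 a b hφ
    have h2 := comm1 a b hdφ
    have hH : ContDiff ℝ (⊤ : ℕ∞) (fun x : Fin 4 → ℝ =>
        2 * ((if a = 0 then (1:ℂ) else 0) * pd 0 (pd b φ) x
          - (if a = 1 then 1 else 0) * pd 1 (pd b φ) x
          - (if a = 2 then 1 else 0) * pd 2 (pd b φ) x
          - (if a = 3 then 1 else 0) * pd 3 (pd b φ) x)) :=
      contDiff_const.mul ((((contDiff_const.mul (pd_smooth 0 (pd_smooth b hφ))).sub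
        (contDiff_const.mul (pd_smooth 1 (pd_smooth b hφ)))).sub
        (contDiff_const.mul (pd_smooth 2 (pd_smooth b hφ)))).sub
        (contDiff_const.mul (pd_smooth 3 (pd_smooth b hφ))))
    simp only [h1]
    rw [dAl_add hH (Gop_smooth a b hdφ) x]
    simp only [h2]
    rw [dAl_comb _ _ _ _ (pd_smooth 0 (pd_smooth b hφ)) (pd_smooth 1 (pd_smooth b hφ))
      (pd_smooth 2 (pd_smooth b hφ)) (pd_smooth 3 (pd_smooth b hφ)) x,
      dAl_pd_pd 0 b hφ x, dAl_pd_pd 1 b hφ x, dAl_pd_pd 2 b hφ x, dAl_pd_pd 3 b hφ x]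
    have hb : pd b (dAl φ) = dAl (pd b φ) := pd_dAl b hφ
    simp only [hb]
    ring
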